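/- arXiv:2205.02196 — 2 statements merged into one kernel-verified Lean document; each statement's English description precedes it below -/
import Mathlib

section
/- For n ≥ 3, the number of partial isometries of C_n with domain of size 1 is n², and for each k with 3 ≤ k ≤ n, the number of partial isometries of C_n with domain of size k is 2n·C(n,k). -/
/-!
Label the vertices of `C_n` by `ZMod n`; the cycle distance of `x` and `y` is then
`|valMinAbs (x - y)|`, so a partial isometry `f` satisfies `f x - f y = ±(x - y)` on its domain.
As `ZMod n` has at most one element of order two, a domain with at least three points contains
`a, b` with `2 (a - b) ≠ 0`; this pins down one sign `e` for all pairs, and `f` is the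
restriction of `x ↦ e x + c`. Conversely every such restriction with `e = ±1` is a partial
isometry, and it determines `e`, `c` and its domain, whence `2 n C(n, k)` maps. A map with a
one-point domain is the restriction of a translation `x ↦ x + c`, whence `n · n` maps.
-/

/-- Geodesic distance on the cycle graph `C_n` with vertices `{1,...,n}`:
`d(x,y) = min (|x-y|, n-|x-y|)`. -/
def cdist (n x y : ℕ) : ℕ := min ((x : ℤ) - y).natAbs (n - ((x : ℤ) - y).natAbs)

/-- The n-cycle permutation `g` of `{1,...,n}`: `i ↦ i+1 (mod n)`. -/
def gfun (n i : ℕ) : ℕ := if i < n then i + 1 else 1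

/-- The reversal permutation `h` of `{1,...,n}`: `i ↦ n-i+1`. -/
def hfun (n i : ℕ) : ℕ := n - i + 1

/-- Left-to-right composition of partial maps (apply `f`, then `g`). -/
def pcomp (f g : ℕ → Option ℕ) : ℕ → Option ℕ := fun x => (f x).bind g

/-- The partial identity on `{1,...,n}`. -/
def pid (n : ℕ) : ℕ → Option ℕ := fun i => if i ∈ Finset.Icc 1 n then some i else none

/-- `g` as a partial map with domain `{1,...,n}`. -/
def gmap (n : ℕ) : ℕ → Option ℕ := fun i => if i ∈ Finset.Icc 1 n then some (gfun n i) else none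

/-- `h` as a partial map with domain `{1,...,n}`. -/
def hmap (n : ℕ) : ℕ → Option ℕ := fun i => if i ∈ Finset.Icc 1 n then some (hfun n i) else none

/-- `e_j`: the partial identity with domain `{1,...,n} \ {j}`. -/
def emap (n j : ℕ) : ℕ → Option ℕ := fun i => if i ∈ Finset.Icc 1 n ∧ i ≠ j then some i else none

/-- `k`-th power of a partial map (with identity `pid n`). -/
def ppow (n : ℕ) (f : ℕ → Option ℕ) : ℕ → (ℕ → Option ℕ)
  | 0 => pid n
  | k + 1 => pcomp f (ppow n f k)

/-- `f` is a partial isometry of the cycle graph `C_n`: a partial injective map on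
`{1,...,n}` preserving the cycle distance. -/
def PIso (n : ℕ) (f : ℕ → Option ℕ) : Prop :=
  (∀ x y, f x = some y → x ∈ Finset.Icc 1 n ∧ y ∈ Finset.Icc 1 n) ∧
  (∀ x y z, f x = some z → f y = some z → x = y) ∧
  (∀ x y x' y', f x = some x' → f y = some y' → cdist n x' y' = cdist n x y)

/-- Domain of a partial map, as a set. -/
def DomS (f : ℕ → Option ℕ) : Set ℕ := {x | (f x).isSome}

/-- Image of a partial map, as a set. -/
def ImS (f : ℕ → Option ℕ) : Set ℕ := {y | ∃ x, f x = some y}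

/-- Domain of a partial map on `{1,...,n}`, as a finset. -/
def domF (n : ℕ) (f : ℕ → Option ℕ) : Finset ℕ :=
  (Finset.Icc 1 n).filter (fun x => (f x).isSome)

/-- The dihedral group `D_{2n}` as the set of the permutations `g^k` and `h·g^k`
(acting on the right, so `h·g^k` applies `h` first) of `{1,...,n}`, `0 ≤ k ≤ n-1`. -/
def Dih (n : ℕ) : Set (ℕ → ℕ) :=
  {σ | ∃ k < n, σ = (gfun n)^[k] ∨ σ = fun i => (gfun n)^[k] (hfun n i)}

/-- `σ` extends the partial map `f`. -/
def Extends (σ : ℕ → ℕ) (f : ℕ → Option ℕ) : Prop := ∀ x y, f x = some y → σ x = y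

open Finset

theorem exists_affine_of_forall_sub_eq_or_eq_neg {ι R : Type*} [CommRing R] {A : Set ι}
    {u v : ι → R}
    (h : ∀ x ∈ A, ∀ y ∈ A, v x - v y = u x - u y ∨ v x - v y = -(u x - u y))
    {a b : ι} (ha : a ∈ A) (hb : b ∈ A) (hab : 2 * (u a - u b) ≠ 0) :
    ∃ e c : R, (e = 1 ∨ e = -1) ∧ ∀ x ∈ A, v x = e * u x + c := by
  obtain ⟨e, he, hvab⟩ : ∃ e : R, (e = 1 ∨ e = -1) ∧ v a - v b = e * (u a - u b) := by
    rcases h a ha b hb with h' | h'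
    · exact ⟨1, .inl rfl, by rw [h', one_mul]⟩
    · exact ⟨-1, .inr rfl, by rw [h', neg_one_mul]⟩
  refine ⟨e, v a - e * u a, he, fun x hx => ?_⟩
  -- If the sign of the pair `(a, x)` differs from `e`, the pair `(b, x)` forces either
  -- `2 * (u a - u b) = 0`, excluded, or `2 * (u a - u x) = 0`, where the two signs agree.
  have hax := h a ha x hx
  have hbx := h b hb x hx
  grind

theorem eq_of_affine_eq_at_two_points {R : Type*} [CommRing R] {e e' c c' p q : R}
    (he : e = 1 ∨ e = -1) (he' : e' = 1 ∨ e' = -1) (hpq : 2 * (p - q) ≠ 0)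
    (hp : e * p + c = e' * p + c') (hq : e * q + c = e' * q + c') : e = e' ∧ c = c' := by
  grind

theorem ZMod.two_mul_sub_ne_zero_or {n : ℕ} [NeZero n] {a b c : ZMod n} (hab : a ≠ b)
    (hac : a ≠ c) (hbc : b ≠ c) : 2 * (a - b) ≠ 0 ∨ 2 * (a - c) ≠ 0 := by
  classical
  by_contra! h
  have hsub : ({0, a - b, a - c} : Finset (ZMod n)) ⊆ ({x | 2 • x = 0} : Finset (ZMod n)) := by
    intro x hx
    simp only [mem_insert, mem_singleton] at hx
    rcases hx with rfl | rfl | rfl <;> simp [h.1, h.2]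
  have hcard : #({0, a - b, a - c} : Finset (ZMod n)) = 3 := by
    rw [card_insert_of_notMem, card_pair] <;> grind
  have := (card_le_card hsub).trans (IsAddCyclic.card_nsmul_eq_zero_le two_pos)
  omega

section CycleGraph

variable {n : ℕ}

/-- The vertex of `C_n` with label `z`, where `x ∈ {1, ..., n}` is labelled by `x mod n`. -/
def cycleVertex (z : ZMod n) : ℕ := (z - 1).val + 1

theorem cycleVertex_mem_Icc [NeZero n] (z : ZMod n) : cycleVertex z ∈ Icc 1 n := by
  have := (z - 1).val_lt
  simp only [cycleVertex, mem_Icc]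
  omega

@[simp]
theorem natCast_cycleVertex [NeZero n] (z : ZMod n) : (cycleVertex z : ZMod n) = z := by
  simp [cycleVertex]

theorem cycleVertex_natCast {x : ℕ} (hx : x ∈ Icc 1 n) : cycleVertex (x : ZMod n) = x := by
  rw [mem_Icc] at hx
  have hcast : (x : ZMod n) - 1 = ((x - 1 : ℕ) : ZMod n) := by
    rw [Nat.cast_sub hx.1, Nat.cast_one]
  rw [cycleVertex, hcast, ZMod.val_cast_of_lt (by omega)]
  omega

theorem natCast_injOn_Icc : Set.InjOn (Nat.cast : ℕ → ZMod n) (Icc 1 n : Set ℕ) :=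
  fun x hx y hy h => by rw [← cycleVertex_natCast hx, h, cycleVertex_natCast hy]

theorem exists_two_mul_natCast_sub_ne_zero [NeZero n] {A : Finset ℕ} (hA : A ⊆ Icc 1 n)
    (h3 : 2 < #A) : ∃ a ∈ A, ∃ b ∈ A, 2 * ((a : ZMod n) - b) ≠ 0 := by
  obtain ⟨a, ha, b, hb, c, hc, hab, hac, hbc⟩ := two_lt_card.mp h3
  have hinj {x y : ℕ} (hx : x ∈ A) (hy : y ∈ A) (hxy : x ≠ y) : (x : ZMod n) ≠ y :=
    fun h => hxy (natCast_injOn_Icc (hA hx) (hA hy) h)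
  rcases ZMod.two_mul_sub_ne_zero_or (hinj ha hb hab) (hinj ha hc hac) (hinj hb hc hbc)
    with h | h
  · exact ⟨a, ha, b, hb, h⟩
  · exact ⟨a, ha, c, hc, h⟩

theorem cdist_eq_natAbs_valMinAbs [NeZero n] {x y : ℕ} (hx : x ∈ Icc 1 n) (hy : y ∈ Icc 1 n) :
    cdist n x y = ((x : ZMod n) - y).valMinAbs.natAbs := by
  rw [mem_Icc] at hx hy
  have hcast : (x : ZMod n) - y = (((x : ℤ) - y : ℤ) : ZMod n) := by push_cast; ring
  have hval := ZMod.val_intCast (n := n) ((x : ℤ) - y)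
  have hmod : ((x : ℤ) - y) % n = (x : ℤ) - y ∨ ((x : ℤ) - y) % n = (x : ℤ) - y + n := by
    rcases le_or_gt y x with h | h
    · exact .inl (Int.emod_eq_of_lt (by omega) (by omega))
    · exact .inr (by rw [← Int.add_emod_right, Int.emod_eq_of_lt (by omega) (by omega)])
  have hlt := (((x : ℤ) - y : ℤ) : ZMod n).val_lt
  rw [hcast, ZMod.valMinAbs_natAbs_eq_min, cdist]
  rcases hmod with h | h <;> rw [h] at hval <;> omega

def affinePMap (e c : ZMod n) (A : Finset ℕ) : ℕ → Option ℕ :=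
  fun x => if x ∈ A then some (cycleVertex (e * (x : ZMod n) + c)) else none

theorem affinePMap_eq_some_iff {e c : ZMod n} {A : Finset ℕ} {x y : ℕ} :
    affinePMap e c A x = some y ↔ x ∈ A ∧ cycleVertex (e * (x : ZMod n) + c) = y := by
  simp [affinePMap]

theorem domF_affinePMap {e c : ZMod n} {A : Finset ℕ} (hA : A ⊆ Icc 1 n) :
    domF n (affinePMap e c A) = A := by
  ext x
  by_cases hx : x ∈ A
  · simp [domF, affinePMap, hx, hA hx]
  · simp [domF, affinePMap, hx]

theorem affinePMap_eq_affinePMap_iff [NeZero n] {e e' c c' : ZMod n} {A A' : Finset ℕ} :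
    affinePMap e c A = affinePMap e' c' A' ↔
      A = A' ∧ ∀ x ∈ A, e * (x : ZMod n) + c = e' * x + c' := by
  constructor
  · intro h
    have hdom (x : ℕ) : x ∈ A ↔ x ∈ A' := by
      have := congrArg Option.isSome (congrFun h x)
      by_cases hx : x ∈ A <;> by_cases hx' : x ∈ A' <;> simp_all [affinePMap]
    refine ⟨Finset.ext hdom, fun x hx => ?_⟩
    have hval := congrFun h x
    simp only [affinePMap, hx, (hdom x).mp hx, if_true, Option.some_inj] at hval
    simpa using congrArg (Nat.cast : ℕ → ZMod n) hval
  · rintro ⟨rfl, h⟩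
    funext x
    by_cases hx : x ∈ A <;> simp [affinePMap, hx, h]

theorem pIso_affinePMap [NeZero n] {e c : ZMod n} {A : Finset ℕ} (he : e = 1 ∨ e = -1)
    (hA : A ⊆ Icc 1 n) : PIso n (affinePMap e c A) := by
  have he2 : e * e = 1 := by rcases he with rfl | rfl <;> simp
  simp only [PIso, affinePMap_eq_some_iff]
  refine ⟨?_, ?_, ?_⟩
  · rintro x y ⟨hx, rfl⟩
    exact ⟨hA hx, cycleVertex_mem_Icc _⟩
  · rintro x y z ⟨hx, rfl⟩ ⟨hy, hxy⟩
    refine natCast_injOn_Icc (hA hx) (hA hy) ?_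
    have := congrArg (Nat.cast : ℕ → ZMod n) hxy
    simp only [natCast_cycleVertex] at this
    linear_combination (-e) * this + ((y : ZMod n) - x) * he2
  · rintro x y x' y' ⟨hx, rfl⟩ ⟨hy, rfl⟩
    rw [cdist_eq_natAbs_valMinAbs (cycleVertex_mem_Icc _) (cycleVertex_mem_Icc _),
      cdist_eq_natAbs_valMinAbs (hA hx) (hA hy), natCast_cycleVertex, natCast_cycleVertex,
      ZMod.natAbs_valMinAbs_eq_natAbs_valMinAbs]
    rcases he with rfl | rfl
    · exact .inl (by ring)
    · exact .inr (by ring)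

theorem PIso.mem_domF {f : ℕ → Option ℕ} (hf : PIso n f) {x y : ℕ} (h : f x = some y) :
    x ∈ domF n f := by
  simp [domF, (hf.1 x y h).1, h]

theorem exists_eq_some_of_mem_domF {f : ℕ → Option ℕ} {x : ℕ} (hx : x ∈ domF n f) :
    ∃ y, f x = some y :=
  Option.isSome_iff_exists.mp (mem_filter.mp hx).2

theorem PIso.eq_affinePMap [NeZero n] {f : ℕ → Option ℕ} (hf : PIso n f) {e c : ZMod n}
    (h : ∀ x y, f x = some y → (y : ZMod n) = e * x + c) : f = affinePMap e c (domF n f) := by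
  funext x
  rcases hfx : f x with _ | y
  · have hx : x ∉ domF n f := by simp [domF, hfx]
    simp [affinePMap, hx]
  · rw [eq_comm, affinePMap_eq_some_iff, ← h x y hfx, cycleVertex_natCast (hf.1 x y hfx).2]
    exact ⟨hf.mem_domF hfx, rfl⟩

theorem PIso.exists_eq_affinePMap_one [NeZero n] {f : ℕ → Option ℕ} (hf : PIso n f)
    (h1 : #(domF n f) = 1) : ∃ c : ZMod n, f = affinePMap 1 c (domF n f) := by
  obtain ⟨x₀, hx₀⟩ := card_eq_one.mp h1
  obtain ⟨y₀, hy₀⟩ := exists_eq_some_of_mem_domF (hx₀ ▸ mem_singleton_self x₀)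
  refine ⟨y₀ - x₀, hf.eq_affinePMap fun x y hxy => ?_⟩
  obtain rfl : x = x₀ := mem_singleton.mp (hx₀ ▸ hf.mem_domF hxy)
  obtain rfl : y = y₀ := Option.some_injective _ (hxy.symm.trans hy₀)
  ring

theorem PIso.exists_eq_affinePMap [NeZero n] {f : ℕ → Option ℕ} (hf : PIso n f)
    (h3 : 2 < #(domF n f)) :
    ∃ e c : ZMod n, (e = 1 ∨ e = -1) ∧ f = affinePMap e c (domF n f) := by
  obtain ⟨a, ha, b, hb, hab⟩ := exists_two_mul_natCast_sub_ne_zero (filter_subset _ _) h3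
  set v : ℕ → ZMod n := fun x => ((f x).getD 0 : ℕ)
  have hv {x y : ℕ} (h : f x = some y) : v x = y := by simp [v, h]
  have hsign : ∀ x ∈ (domF n f : Set ℕ), ∀ y ∈ (domF n f : Set ℕ),
      v x - v y = (x - y : ZMod n) ∨ v x - v y = -(x - y : ZMod n) := by
    intro x hx y hy
    obtain ⟨x', hx'⟩ := exists_eq_some_of_mem_domF hx
    obtain ⟨y', hy'⟩ := exists_eq_some_of_mem_domF hy
    have hd := hf.2.2 x y x' y' hx' hy'
    rwa [cdist_eq_natAbs_valMinAbs (hf.1 x x' hx').2 (hf.1 y y' hy').2,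
      cdist_eq_natAbs_valMinAbs (hf.1 x x' hx').1 (hf.1 y y' hy').1,
      ZMod.natAbs_valMinAbs_eq_natAbs_valMinAbs, ← hv hx', ← hv hy'] at hd
  obtain ⟨e, c, he, hvec⟩ := exists_affine_of_forall_sub_eq_or_eq_neg hsign ha hb hab
  refine ⟨e, c, he, hf.eq_affinePMap fun x y hxy => ?_⟩
  rw [← hv hxy]
  exact hvec x (hf.mem_domF hxy)

theorem ncard_pIso_domF_card_eq_of_affine [NeZero n] {E : Finset (ZMod n)} {k : ℕ}
    (hE : ∀ e ∈ E, e = 1 ∨ e = -1)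
    (hsurj : ∀ f, PIso n f → #(domF n f) = k →
      ∃ e ∈ E, ∃ c, f = affinePMap e c (domF n f))
    (hinj : ∀ A ⊆ Icc 1 n, #A = k → ∀ e ∈ E, ∀ e' ∈ E, ∀ c c' : ZMod n,
      (∀ x ∈ A, e * (x : ZMod n) + c = e' * x + c') → e = e' ∧ c = c') :
    {f | PIso n f ∧ #(domF n f) = k}.ncard = #E * n * n.choose k := by
  classical
  set P := E ×ˢ (univ : Finset (ZMod n)) ×ˢ powersetCard k (Icc 1 n)
  have hP {p : ZMod n × ZMod n × Finset ℕ} :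
      p ∈ P ↔ p.1 ∈ E ∧ p.2.2 ⊆ Icc 1 n ∧ #p.2.2 = k := by
    simp [P]
  have himage : {f | PIso n f ∧ #(domF n f) = k} =
      P.image (fun p => affinePMap p.1 p.2.1 p.2.2) := by
    ext f
    simp only [Set.mem_ofPred_eq, coe_image, Set.mem_image, mem_coe, hP]
    constructor
    · rintro ⟨hf, hk⟩
      obtain ⟨e, he, c, hfe⟩ := hsurj f hf hk
      exact ⟨(e, c, domF n f), ⟨he, filter_subset _ _, hk⟩, hfe.symm⟩
    · rintro ⟨⟨e, c, A⟩, ⟨he, hA, hk⟩, rfl⟩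
      exact ⟨pIso_affinePMap (hE e he) hA, by rw [domF_affinePMap hA, hk]⟩
  have hinjOn : Set.InjOn (fun p : ZMod n × ZMod n × Finset ℕ => affinePMap p.1 p.2.1 p.2.2)
      (P : Set (ZMod n × ZMod n × Finset ℕ)) := by
    rintro ⟨e, c, A⟩ hp ⟨e', c', A'⟩ hp' h
    rw [mem_coe, hP] at hp hp'
    obtain ⟨rfl, hAA⟩ := affinePMap_eq_affinePMap_iff.mp h
    obtain ⟨rfl, rfl⟩ := hinj A hp.2.1 hp.2.2 e hp.1 e' hp'.1 c c' hAA
    rfl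
  rw [himage, Set.ncard_coe_finset, card_image_of_injOn hinjOn, card_product, card_product,
    card_univ, ZMod.card, card_powersetCard, Nat.card_Icc, Nat.add_sub_cancel, mul_assoc]

theorem ncard_pIso_domF_card_eq_one [NeZero n] :
    {f | PIso n f ∧ #(domF n f) = 1}.ncard = n ^ 2 := by
  rw [ncard_pIso_domF_card_eq_of_affine (E := {1}) (by simp)]
  · simp [sq]
  · intro f hf h1
    simpa using hf.exists_eq_affinePMap_one h1
  · intro A _ hA e he e' he' c c' h
    obtain ⟨x, rfl⟩ := card_eq_one.mp hA
    rw [mem_singleton] at he he'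
    subst he he'
    simpa using h x (mem_singleton_self x)

theorem ncard_pIso_domF_card_eq_of_three_le (hn : 2 < n) {k : ℕ} (hk : 3 ≤ k) :
    {f | PIso n f ∧ #(domF n f) = k}.ncard = 2 * n * n.choose k := by
  have : Fact (2 < n) := ⟨hn⟩
  have : NeZero n := .of_pos (by omega)
  rw [ncard_pIso_domF_card_eq_of_affine (E := {1, -1}) (by simp),
    card_pair ZMod.neg_one_ne_one.symm]
  · intro f hf hk'
    obtain ⟨e, c, he, hfe⟩ := hf.exists_eq_affinePMap (by omega)
    exact ⟨e, by simpa using he, c, hfe⟩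
  · intro A hA _ e he e' he' c c' h
    obtain ⟨a, ha, b, hb, hab⟩ := exists_two_mul_natCast_sub_ne_zero hA (by omega)
    simp only [mem_insert, mem_singleton] at he he'
    exact eq_of_affine_eq_at_two_points he he' hab (h a ha) (h b hb)

end CycleGraph

/-- the number of partial isometries of `C_n` with domain of size `1` is
`n²`, and with domain of size `k` (`3 ≤ k ≤ n`) is `2n·C(n,k)`. -/
theorem stmt_12 (n : ℕ) (hn : 3 ≤ n) :
    Set.ncard {f : ℕ → Option ℕ | PIso n f ∧ (domF n f).card = 1} = n ^ 2 ∧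
    ∀ k, 3 ≤ k → k ≤ n →
      Set.ncard {f : ℕ → Option ℕ | PIso n f ∧ (domF n f).card = k} =
        2 * n * Nat.choose n k := by
  have : NeZero n := .of_pos (by omega)
  exact ⟨ncard_pIso_domF_card_eq_one, fun k hk _ => ncard_pIso_domF_card_eq_of_three_le hn hk⟩
end

section
/- For even n ≥ 4, the number of partial isometries α of C_n with |Dom(α)| = 2 and d(min Dom(α), max Dom(α)) = n/2 is n²/2; explicitly these are the maps sending {i, i+n/2} to {j, j+n/2} (in either of the two ways) for 1 ≤ i, j ≤ n/2. -/
/-- The partial map sending `a ↦ c` and `b ↦ d` (undefined elsewhere). -/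
def pmap2 (a b c d : ℕ) : ℕ → Option ℕ :=
  fun x => if x = a then some c else if x = b then some d else none

lemma pmap2_eq_some_iff {a b c d x y : ℕ} :
    pmap2 a b c d x = some y ↔ (x = a ∧ y = c) ∨ (x ≠ a ∧ x = b ∧ y = d) := by
  unfold pmap2
  split_ifs <;> simp_all [eq_comm]

lemma pmap2_injective {a b c d a' b' c' d' : ℕ} (hab : a < b) (hab' : a' < b')
    (h : pmap2 a b c d = pmap2 a' b' c' d') : a = a' ∧ b = b' ∧ c = c' ∧ d = d' := by
  have ha := congrFun h a
  have hb := congrFun h b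
  have ha' := congrFun h a'
  have hb' := congrFun h b'
  simp only [pmap2] at ha hb ha' hb'
  split_ifs at ha hb ha' hb' <;> (try simp only [Option.some.injEq] at *) <;> omega

lemma cdist_self (n x : ℕ) : cdist n x x = 0 := by
  simp [cdist]

lemma cdist_comm (n x y : ℕ) : cdist n x y = cdist n y x := by
  unfold cdist; omega

lemma cdist_two_mul_eq_iff {m : ℕ} (hm : 0 < m) (x y : ℕ) :
    cdist (2 * m) x y = m ↔ x + m = y ∨ y + m = x := by
  unfold cdist; omega

lemma piso_pmap2 {n a b c d : ℕ} (ha : a ∈ Finset.Icc 1 n) (hb : b ∈ Finset.Icc 1 n)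
    (hc : c ∈ Finset.Icc 1 n) (hd : d ∈ Finset.Icc 1 n) (hab : a ≠ b) (hcd : c ≠ d)
    (hdist : cdist n c d = cdist n a b) : PIso n (pmap2 a b c d) := by
  refine ⟨?_, ?_, ?_⟩
  · intro x y h
    rcases pmap2_eq_some_iff.1 h with ⟨rfl, rfl⟩ | ⟨-, rfl, rfl⟩ <;> exact ⟨‹_›, ‹_›⟩
  · intro x y z hx hy
    rcases pmap2_eq_some_iff.1 hx with ⟨rfl, rfl⟩ | ⟨-, rfl, rfl⟩ <;>
      rcases pmap2_eq_some_iff.1 hy with ⟨rfl, h⟩ | ⟨-, rfl, h⟩ <;> tauto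
  · intro x y x' y' hx hy
    rcases pmap2_eq_some_iff.1 hx with ⟨rfl, rfl⟩ | ⟨-, rfl, rfl⟩ <;>
      rcases pmap2_eq_some_iff.1 hy with ⟨rfl, rfl⟩ | ⟨-, rfl, rfl⟩
    all_goals first
      | simp only [cdist_self]
      | exact hdist
      | rw [cdist_comm, hdist, cdist_comm]

lemma domF_pmap2 {n a b c d : ℕ} (ha : a ∈ Finset.Icc 1 n) (hb : b ∈ Finset.Icc 1 n) :
    domF n (pmap2 a b c d) = {a, b} := by
  ext x
  rw [domF, Finset.mem_filter, Finset.mem_insert, Finset.mem_singleton]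
  simp only [pmap2]
  by_cases hxa : x = a
  · subst hxa; simpa using ha
  · by_cases hxb : x = b
    · subst hxb; simpa [hxa] using hb
    · simp [hxa, hxb]

lemma mem_Icc_of_mem_domF {n x : ℕ} {f : ℕ → Option ℕ} (h : x ∈ domF n f) :
    x ∈ Finset.Icc 1 n :=
  (Finset.mem_filter.1 h).1

lemma exists_apply_eq_some_of_mem_domF {n x : ℕ} {f : ℕ → Option ℕ} (h : x ∈ domF n f) :
    ∃ y, f x = some y :=
  Option.isSome_iff_exists.1 (Finset.mem_filter.1 h).2

lemma eq_pmap2_of_domF_eq_pair {n a b c d : ℕ} {f : ℕ → Option ℕ}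
    (hsupp : ∀ x y, f x = some y → x ∈ Finset.Icc 1 n) (hdom : domF n f = {a, b})
    (ha : f a = some c) (hb : f b = some d) : f = pmap2 a b c d := by
  funext x
  unfold pmap2
  split_ifs with hxa hxb
  · rw [hxa, ha]
  · rw [hxb, hb]
  · cases hx : f x with
    | none => rfl
    | some y =>
      have hmem : x ∈ domF n f := Finset.mem_filter.2 ⟨hsupp x y hx, by simp [hx]⟩
      rw [hdom] at hmem
      simp_all

lemma exists_antipodal_of_piso {m : ℕ} {f : ℕ → Option ℕ} (hf : PIso (2 * m) f) {i j : ℕ}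
    (hij : i < j) (hdom : domF (2 * m) f = {i, j}) (hdist : 2 * cdist (2 * m) i j = 2 * m) :
    ∃ i j, 1 ≤ i ∧ i ≤ m ∧ 1 ≤ j ∧ j ≤ m ∧
      (f = pmap2 i (i + m) j (j + m) ∨ f = pmap2 i (i + m) (j + m) j) := by
  obtain ⟨hsupp, -, hiso⟩ := hf
  have hi : i ∈ domF (2 * m) f := by simp [hdom]
  have hj : j ∈ domF (2 * m) f := by simp [hdom]
  have hi' := Finset.mem_Icc.1 (mem_Icc_of_mem_domF hi)
  have hj' := Finset.mem_Icc.1 (mem_Icc_of_mem_domF hj)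
  have hm : 0 < m := by omega
  obtain rfl : j = i + m := by have := (cdist_two_mul_eq_iff hm i j).1 (by omega); omega
  obtain ⟨c, hc⟩ := exists_apply_eq_some_of_mem_domF hi
  obtain ⟨d, hd⟩ := exists_apply_eq_some_of_mem_domF hj
  have hc' := Finset.mem_Icc.1 (hsupp i c hc).2
  have hd' := Finset.mem_Icc.1 (hsupp _ d hd).2
  have hfeq := eq_pmap2_of_domF_eq_pair (fun x y h => (hsupp x y h).1) hdom hc hd
  have hcd : c + m = d ∨ d + m = c :=
    (cdist_two_mul_eq_iff hm c d).1 (by rw [hiso i _ c d hc hd]; omega)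
  rcases hcd with rfl | rfl
  · exact ⟨i, c, hi'.1, by omega, hc'.1, by omega, .inl hfeq⟩
  · exact ⟨i, d, hi'.1, by omega, hd'.1, by omega, .inr hfeq⟩

lemma piso_pmap2_antipodal {m i c d : ℕ} (hi : 1 ≤ i) (him : i ≤ m)
    (hc : c ∈ Finset.Icc 1 (2 * m)) (hd : d ∈ Finset.Icc 1 (2 * m)) (hcd : c + m = d ∨ d + m = c) :
    PIso (2 * m) (pmap2 i (i + m) c d) ∧
      ∃ i' j', i' < j' ∧ domF (2 * m) (pmap2 i (i + m) c d) = {i', j'} ∧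
        2 * cdist (2 * m) i' j' = 2 * m := by
  have hm : 0 < m := by omega
  have hi' : i ∈ Finset.Icc 1 (2 * m) := Finset.mem_Icc.2 ⟨hi, by omega⟩
  have him' : i + m ∈ Finset.Icc 1 (2 * m) := Finset.mem_Icc.2 ⟨by omega, by omega⟩
  have hdist : cdist (2 * m) i (i + m) = m := (cdist_two_mul_eq_iff hm _ _).2 (.inl rfl)
  refine ⟨piso_pmap2 hi' him' hc hd (by omega) (by omega) ?_,
    i, i + m, by omega, domF_pmap2 hi' him', by omega⟩
  rwa [hdist, cdist_two_mul_eq_iff hm]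

def antipodalPairMap (m : ℕ) : (ℕ × ℕ) × Bool → ℕ → Option ℕ
  | ((i, j), true) => pmap2 i (i + m) j (j + m)
  | ((i, j), false) => pmap2 i (i + m) (j + m) j

lemma ncard_antipodal_maps (m : ℕ) :
    {f : ℕ → Option ℕ | ∃ i j, 1 ≤ i ∧ i ≤ m ∧ 1 ≤ j ∧ j ≤ m ∧
      (f = pmap2 i (i + m) j (j + m) ∨ f = pmap2 i (i + m) (j + m) j)}.ncard = 2 * m ^ 2 := by
  classical
  have hset : {f : ℕ → Option ℕ | ∃ i j, 1 ≤ i ∧ i ≤ m ∧ 1 ≤ j ∧ j ≤ m ∧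
      (f = pmap2 i (i + m) j (j + m) ∨ f = pmap2 i (i + m) (j + m) j)} =
      (((Finset.Icc 1 m ×ˢ Finset.Icc 1 m) ×ˢ Finset.univ).image (antipodalPairMap m) :) := by
    ext f
    simp only [Set.mem_ofPred_eq, Finset.coe_image, Set.mem_image, Finset.mem_coe,
      Finset.mem_product, Finset.mem_Icc, Finset.mem_univ, and_true, Prod.exists,
      Bool.exists_bool, antipodalPairMap]
    refine exists₂_congr fun i j => ?_
    rw [@eq_comm _ f, @eq_comm _ f]
    tauto
  rw [hset, Set.ncard_coe_finset, Finset.card_image_of_injOn]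
  · simp [Finset.card_product]
    ring
  · rintro ⟨⟨i, j⟩, b⟩ hp ⟨⟨i', j'⟩, b'⟩ hp' heq
    simp only [Finset.coe_product, Set.mem_prod, Finset.mem_coe, Finset.mem_Icc,
      Finset.coe_univ, Set.mem_univ, and_true] at hp hp'
    cases b <;> cases b' <;>
      obtain ⟨rfl, -, hc, hd⟩ := pmap2_injective (by omega) (by omega) heq <;>
      simp <;> omega

theorem stmt_13_general (n : ℕ) (he : Even n) :
    {f : ℕ → Option ℕ | PIso n f ∧
        ∃ i j, i < j ∧ domF n f = {i, j} ∧ 2 * cdist n i j = n} =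
      {f : ℕ → Option ℕ | ∃ i j, 1 ≤ i ∧ i ≤ n / 2 ∧ 1 ≤ j ∧ j ≤ n / 2 ∧
        (f = pmap2 i (i + n / 2) j (j + n / 2) ∨
         f = pmap2 i (i + n / 2) (j + n / 2) j)} ∧
    2 * Set.ncard {f : ℕ → Option ℕ | PIso n f ∧
        ∃ i j, i < j ∧ domF n f = {i, j} ∧ 2 * cdist n i j = n} = n ^ 2 := by
  obtain ⟨m, rfl⟩ := even_iff_two_dvd.1 he
  rw [Nat.mul_div_cancel_left m two_pos]
  have hchar : {f : ℕ → Option ℕ | PIso (2 * m) f ∧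
        ∃ i j, i < j ∧ domF (2 * m) f = {i, j} ∧ 2 * cdist (2 * m) i j = 2 * m} =
      {f : ℕ → Option ℕ | ∃ i j, 1 ≤ i ∧ i ≤ m ∧ 1 ≤ j ∧ j ≤ m ∧
        (f = pmap2 i (i + m) j (j + m) ∨ f = pmap2 i (i + m) (j + m) j)} := by
    ext f
    constructor
    · rintro ⟨hf, i, j, hij, hdom, hdist⟩
      exact exists_antipodal_of_piso hf hij hdom hdist
    · rintro ⟨i, j, hi, him, hj, hjm, rfl | rfl⟩
      all_goals
        exact piso_pmap2_antipodal hi him (Finset.mem_Icc.2 ⟨by omega, by omega⟩)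
          (Finset.mem_Icc.2 ⟨by omega, by omega⟩) (by omega)
  refine ⟨hchar, ?_⟩
  rw [hchar, ncard_antipodal_maps]
  ring

/-- for even `n ≥ 4`, the partial isometries of `C_n` with domain a pair
at distance `n/2` are exactly the maps sending `{i, i+n/2}` to `{j, j+n/2}` in either
way (`1 ≤ i, j ≤ n/2`), and there are `n²/2` of them. -/
theorem stmt_13 (n : ℕ) (hn : 4 ≤ n) (he : Even n) :
    {f : ℕ → Option ℕ | PIso n f ∧
        ∃ i j, i < j ∧ domF n f = {i, j} ∧ 2 * cdist n i j = n} =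
      {f : ℕ → Option ℕ | ∃ i j, 1 ≤ i ∧ i ≤ n / 2 ∧ 1 ≤ j ∧ j ≤ n / 2 ∧
        (f = pmap2 i (i + n / 2) j (j + n / 2) ∨
         f = pmap2 i (i + n / 2) (j + n / 2) j)} ∧
    2 * Set.ncard {f : ℕ → Option ℕ | PIso n f ∧
        ∃ i j, i < j ∧ domF n f = {i, j} ∧ 2 * cdist n i j = n} = n ^ 2 :=
  stmt_13_general n he
end
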